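/- arXiv:2510.25192 — 5 statements merged into one kernel-verified Lean document; each statement's English description precedes it below -/
import Mathlib

section
/- The energy efficiency f_EE(P) is concave on the interval [0, P*]; in particular, its second derivative is strictly negative at every P ∈ (0, P*). -/
/-!
Writing `D = P + P_f + χ·f_SE` for the denominator of `f_EE`, the `χ·f_SE` terms cancel in the
numerator of `f_EE'`, leaving `f_EE' = G / (ln 2 · D²)` with
`G(P) = ζ(P + P_f)/(1 + ζP) - ln(1 + ζP)`. The gap `G` is strictly decreasing and vanishes at
`P*`, so it is nonnegative on `[0, P*]`; there `f_EE'` is a nonnegative decreasing function over a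
positive increasing one, hence `f_EE'' < 0`.
-/

open Real Set Topology

theorem hasDerivAt_div_add_mul_self {S : ℝ → ℝ} {S' c χ x : ℝ} (hS : HasDerivAt S S' x)
    (hD : x + c + χ * S x ≠ 0) :
    HasDerivAt (fun y => S y / (y + c + χ * S y))
      ((S' * (x + c) - S x) / (x + c + χ * S x) ^ 2) x := by
  have hD' : HasDerivAt (fun y => y + c + χ * S y) (1 + χ * S') x :=
    ((hasDerivAt_id' x).add_const c).add (hS.const_mul χ)
  exact (hS.div hD' hD).congr_deriv (by ring)

theorem deriv_div_const_mul_sq_neg {G D : ℝ → ℝ} {G' D' c x : ℝ} (hG : HasDerivAt G G' x)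
    (hD : HasDerivAt D D' x) (hc : 0 < c) (hG' : G' < 0) (hGx : 0 ≤ G x) (hDx : 0 < D x)
    (hD' : 0 ≤ D') :
    deriv (fun y => G y / (c * D y ^ 2)) x < 0 := by
  have hquot : HasDerivAt (fun y => G y / (c * D y ^ 2))
      ((G' * (c * D x ^ 2) - G x * (c * (2 * D x ^ (2 - 1) * D'))) / (c * D x ^ 2) ^ 2) x :=
    hG.div ((hD.pow 2).const_mul c) (by positivity)
  rw [hquot.deriv]
  apply div_neg_of_neg_of_pos _ (by positivity)
  have hdecr : G' * (c * D x ^ 2) < 0 := mul_neg_of_neg_of_pos hG' (by positivity)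
  have hincr : 0 ≤ G x * (c * (2 * D x ^ (2 - 1) * D')) := by positivity
  linarith

noncomputable def fSE (ζ P : ℝ) : ℝ :=
  logb 2 (1 + ζ * P)

noncomputable def fEE (ζ Pf χ P : ℝ) : ℝ :=
  fSE ζ P / (P + Pf + χ * fSE ζ P)

noncomputable def stationarityGap (ζ Pf P : ℝ) : ℝ :=
  ζ * (P + Pf) / (1 + ζ * P) - log (1 + ζ * P)

section

variable {ζ Pf χ P : ℝ}

theorem fSE_nonneg (hζ : 0 ≤ ζ) (hP : 0 ≤ P) : 0 ≤ fSE ζ P :=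
  logb_nonneg one_lt_two (by nlinarith)

theorem hasDerivAt_fSE (hP : 1 + ζ * P ≠ 0) :
    HasDerivAt (fSE ζ) (ζ / (1 + ζ * P) / log 2) P := by
  have hlin : HasDerivAt (fun y => 1 + ζ * y) ζ P := by
    simpa using ((hasDerivAt_id' P).const_mul ζ).const_add 1
  refine (((hasDerivAt_log hP).comp P hlin).div_const (log 2)).congr_deriv ?_
  ring

theorem hasDerivAt_stationarityGap (hP : 1 + ζ * P ≠ 0) :
    HasDerivAt (stationarityGap ζ Pf) (-(ζ ^ 2 * (P + Pf)) / (1 + ζ * P) ^ 2) P := by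
  have hlin : HasDerivAt (fun y => 1 + ζ * y) ζ P := by
    simpa using ((hasDerivAt_id' P).const_mul ζ).const_add 1
  have hnum : HasDerivAt (fun y => ζ * (y + Pf)) ζ P := by
    simpa using ((hasDerivAt_id' P).add_const Pf).const_mul ζ
  refine ((hnum.div hlin hP).sub ((hasDerivAt_log hP).comp P hlin)).congr_deriv ?_
  field_simp
  ring

theorem stationarityGap_strictAntiOn (hζ : 0 < ζ) (hPf : 0 < Pf) :
    StrictAntiOn (stationarityGap ζ Pf) (Ici 0) := by
  have hderiv : ∀ y ∈ Ici (0 : ℝ), HasDerivAt (stationarityGap ζ Pf)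
      (-(ζ ^ 2 * (y + Pf)) / (1 + ζ * y) ^ 2) y := fun y (hy : 0 ≤ y) =>
    hasDerivAt_stationarityGap (by positivity)
  refine strictAntiOn_of_deriv_neg (convex_Ici 0)
    (fun y hy => (hderiv y hy).continuousAt.continuousWithinAt) fun y hy => ?_
  rw [interior_Ici] at hy
  have hy' : 0 < y := hy
  rw [(hderiv y hy'.le).deriv, neg_div]
  exact neg_neg_of_pos (by positivity)

theorem stationarityGap_eq_zero (hP : 1 + ζ * P ≠ 0)
    (hroot : ζ * (P + Pf) = (1 + ζ * P) * log (1 + ζ * P)) :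
    stationarityGap ζ Pf P = 0 := by
  rw [stationarityGap, hroot, mul_div_cancel_left₀ _ hP, sub_self]

theorem stationarityGap_nonneg_of_le (hζ : 0 < ζ) (hPf : 0 < Pf) {Pstar : ℝ}
    (hroot : ζ * (Pstar + Pf) = (1 + ζ * Pstar) * log (1 + ζ * Pstar))
    (hP : 0 ≤ P) (hPP : P ≤ Pstar) :
    0 ≤ stationarityGap ζ Pf P := by
  have hPstar : 0 ≤ Pstar := hP.trans hPP
  rw [← stationarityGap_eq_zero (by positivity) hroot]
  exact (stationarityGap_strictAntiOn hζ hPf).antitoneOn hP hPstar hPP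

theorem hasDerivAt_fEE (hζ : 0 < ζ) (hPf : 0 < Pf) (hχ : 0 ≤ χ) (hP : 0 ≤ P) :
    HasDerivAt (fEE ζ Pf χ)
      (stationarityGap ζ Pf P / (log 2 * (P + Pf + χ * fSE ζ P) ^ 2)) P := by
  have hSE := fSE_nonneg hζ.le hP
  have h1 : 0 < 1 + ζ * P := by positivity
  refine (hasDerivAt_div_add_mul_self (hasDerivAt_fSE h1.ne') (by positivity)).congr_deriv ?_
  rw [stationarityGap, fSE, logb]
  field_simp

theorem deriv_deriv_fEE_neg (hζ : 0 < ζ) (hPf : 0 < Pf) (hχ : 0 ≤ χ) (hP : 0 < P)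
    (hgap : 0 ≤ stationarityGap ζ Pf P) :
    deriv (deriv (fEE ζ Pf χ)) P < 0 := by
  have hderiv : deriv (fEE ζ Pf χ) =ᶠ[𝓝 P]
      fun y => stationarityGap ζ Pf y / (log 2 * (y + Pf + χ * fSE ζ y) ^ 2) := by
    filter_upwards [Ioi_mem_nhds hP] with y hy
    exact (hasDerivAt_fEE hζ hPf hχ (le_of_lt hy)).deriv
  have h1 : 0 < 1 + ζ * P := by positivity
  have hSE := fSE_nonneg hζ.le hP.le
  have hD : HasDerivAt (fun y => y + Pf + χ * fSE ζ y) (1 + χ * (ζ / (1 + ζ * P) / log 2)) P :=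
    ((hasDerivAt_id' P).add_const Pf).add ((hasDerivAt_fSE h1.ne').const_mul χ)
  rw [hderiv.deriv_eq]
  refine deriv_div_const_mul_sq_neg (hasDerivAt_stationarityGap h1.ne') hD (log_pos one_lt_two)
    ?_ hgap (by positivity) (by positivity)
  rw [neg_div]
  exact neg_neg_of_pos (by positivity)

end

theorem fEE_concave_on_Icc_general
    (ζ Pf χ : ℝ) (hζ : 0 < ζ) (hPf : 0 < Pf) (hχ : 0 ≤ χ)
    (Pstar : ℝ)
    (hroot : ζ * (Pstar + Pf) = (1 + ζ * Pstar) * Real.log (1 + ζ * Pstar)) :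
    ConcaveOn ℝ (Set.Icc 0 Pstar)
        (fun P : ℝ =>
          Real.logb 2 (1 + ζ * P) / (P + Pf + χ * Real.logb 2 (1 + ζ * P))) ∧
      ∀ P ∈ Set.Ioo 0 Pstar,
        deriv
            (deriv
              (fun P : ℝ =>
                Real.logb 2 (1 + ζ * P) /
                  (P + Pf + χ * Real.logb 2 (1 + ζ * P)))) P < 0 := by
  have hneg : ∀ P ∈ Ioo 0 Pstar, deriv (deriv (fEE ζ Pf χ)) P < 0 := fun P hP =>
    deriv_deriv_fEE_neg hζ hPf hχ hP.1
      (stationarityGap_nonneg_of_le hζ hPf hroot hP.1.le hP.2.le)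
  have hcont : ContinuousOn (fEE ζ Pf χ) (Icc 0 Pstar) := fun P hP =>
    (hasDerivAt_fEE hζ hPf hχ hP.1).continuousAt.continuousWithinAt
  refine ⟨(strictConcaveOn_of_deriv2_neg (convex_Icc 0 Pstar) hcont ?_).concaveOn, hneg⟩
  rw [interior_Icc]
  exact hneg

/-- Lemma 2 (concavity part): the energy efficiency
`f_EE(P) = log₂(1 + ζP) / (P + P_f + χ·log₂(1 + ζP))` is concave on `[0, P*]`,
and its second derivative is strictly negative on `(0, P*)`, where `P*` is the
unique positive root of `ζ(P + P_f) = (1 + ζP)·ln(1 + ζP)`. -/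
theorem fEE_concave_on_Icc
    (ζ Pf χ : ℝ) (hζ : 0 < ζ) (hPf : 0 < Pf) (hχ : 0 ≤ χ)
    (Pstar : ℝ) (hPstar : 0 < Pstar)
    (hroot : ζ * (Pstar + Pf) = (1 + ζ * Pstar) * Real.log (1 + ζ * Pstar)) :
    ConcaveOn ℝ (Set.Icc 0 Pstar)
        (fun P : ℝ =>
          Real.logb 2 (1 + ζ * P) / (P + Pf + χ * Real.logb 2 (1 + ζ * P))) ∧
      ∀ P ∈ Set.Ioo 0 Pstar,
        deriv
            (deriv
              (fun P : ℝ =>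
                Real.logb 2 (1 + ζ * P) /
                  (P + Pf + χ * Real.logb 2 (1 + ζ * P)))) P < 0 :=
  fEE_concave_on_Icc_general ζ Pf χ hζ hPf hχ Pstar hroot
end

section
/- Call a point P ∈ [0, P_T] Pareto optimal if there is no P' ∈ [0, P_T] with both f_SE(P') > f_SE(P) and f_EE(P') > f_EE(P). Then the set of Pareto optimal points equals {P_T} if P* ≥ P_T, and equals the closed interval [P*, P_T] if P* < P_T. -/
/-!
On `[0, ∞)` the spectral efficiency is strictly increasing, while the energy efficiency is a
strictly increasing function of `log (1 + ζ P) / (P + P_f)` (the term `χ f_SE` in the denominator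
does not change the order). The derivative of this ratio has the sign of
`ζ (P + P_f) - (1 + ζ P) log (1 + ζ P)`, which is strictly decreasing and vanishes at `P*`, so the
energy efficiency increases up to `P*` and decreases after it. Hence a point is Pareto optimal
exactly when no larger power still increases the energy efficiency.
-/

open Real Set

section Pareto

variable {α β γ : Type*} [LinearOrder α] [Preorder β] [Preorder γ]

def paretoSet (f : α → β) (g : α → γ) (s : Set α) : Set α :=
  {x ∈ s | ¬∃ y ∈ s, f x < f y ∧ g x < g y}

theorem paretoSet_Icc_eq_Icc {f : α → β} {g : α → γ} {a p b : α} (hap : a ≤ p) (hpb : p ≤ b)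
    (hf : StrictMonoOn f (Icc a b)) (hg_mono : StrictMonoOn g (Icc a p))
    (hg_anti : StrictAntiOn g (Icc p b)) :
    paretoSet f g (Icc a b) = Icc p b := by
  ext x
  constructor
  · rintro ⟨hx, hnot⟩
    refine ⟨not_lt.1 fun hxp => hnot ⟨p, ⟨hap, hpb⟩, ?_, ?_⟩, hx.2⟩
    · exact hf hx ⟨hap, hpb⟩ hxp
    · exact hg_mono ⟨hx.1, hxp.le⟩ ⟨hap, le_rfl⟩ hxp
  · intro hx
    have hx' : x ∈ Icc a b := ⟨hap.trans hx.1, hx.2⟩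
    refine ⟨hx', fun ⟨y, hy, hfxy, hgxy⟩ => ?_⟩
    have hxy : x < y := (hf.lt_iff_lt hx' hy).1 hfxy
    exact lt_asymm hgxy (hg_anti hx ⟨hx.1.trans hxy.le, hy.2⟩ hxy)

end Pareto

theorem div_add_mul_lt_div_add_mul_iff {s t a b χ : ℝ} (hs : 0 ≤ s) (ht : 0 ≤ t)
    (ha : 0 < a) (hb : 0 < b) (hχ : 0 ≤ χ) :
    s / (a + χ * s) < t / (b + χ * t) ↔ s / a < t / b := by
  rw [div_lt_div_iff₀ (by positivity) (by positivity), div_lt_div_iff₀ ha hb]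
  constructor <;> intro h <;> linarith

section PowerControl

variable {ζ Pf : ℝ}

noncomputable def spectralEff (ζ P : ℝ) : ℝ := logb 2 (1 + ζ * P)

noncomputable def energyEff (ζ Pf χ P : ℝ) : ℝ :=
  spectralEff ζ P / (P + Pf + χ * spectralEff ζ P)

theorem strictMonoOn_spectralEff (hζ : 0 < ζ) : StrictMonoOn (spectralEff ζ) (Ici 0) :=
  fun _ hx _ _ hxy => logb_lt_logb one_lt_two (by nlinarith [mem_Ici.1 hx]) (by nlinarith)

theorem spectralEff_nonneg (hζ : 0 < ζ) {P : ℝ} (hP : 0 ≤ P) : 0 ≤ spectralEff ζ P :=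
  logb_nonneg one_lt_two (by nlinarith)

theorem energyEff_lt_energyEff_iff (hζ : 0 < ζ) (hPf : 0 < Pf) {χ P₁ P₂ : ℝ} (hχ : 0 ≤ χ)
    (h₁ : 0 ≤ P₁) (h₂ : 0 ≤ P₂) :
    energyEff ζ Pf χ P₁ < energyEff ζ Pf χ P₂ ↔
      log (1 + ζ * P₁) / (P₁ + Pf) < log (1 + ζ * P₂) / (P₂ + Pf) := by
  rw [energyEff, energyEff, div_add_mul_lt_div_add_mul_iff
    (spectralEff_nonneg hζ h₁) (spectralEff_nonneg hζ h₂) (by linarith) (by linarith) hχ]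
  simp only [spectralEff, logb, div_right_comm _ (log 2)]
  exact div_lt_div_iff_of_pos_right (log_pos one_lt_two)

theorem hasDerivAt_log_one_add_mul {x : ℝ} (hx : 0 < 1 + ζ * x) :
    HasDerivAt (fun P => log (1 + ζ * P)) (ζ / (1 + ζ * x)) x := by
  have h := ((hasDerivAt_id x).const_mul ζ).const_add 1
  simp only [mul_one] at h
  exact (h.log hx.ne').congr_deriv (by simp)

noncomputable def optimalityGap (ζ Pf P : ℝ) : ℝ :=
  ζ * (P + Pf) - (1 + ζ * P) * log (1 + ζ * P)

theorem strictAntiOn_optimalityGap (hζ : 0 < ζ) : StrictAntiOn (optimalityGap ζ Pf) (Ici 0) := by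
  have hderiv : ∀ x ∈ Ici (0 : ℝ),
      HasDerivAt (optimalityGap ζ Pf) (-(ζ * log (1 + ζ * x))) x := by
    intro x hx
    have hx' : 0 < 1 + ζ * x := by nlinarith [mem_Ici.1 hx]
    have h := (((hasDerivAt_id x).add_const Pf).const_mul ζ).sub
      ((((hasDerivAt_id x).const_mul ζ).const_add 1).mul (hasDerivAt_log_one_add_mul hx'))
    refine h.congr_deriv ?_
    simp only [id, mul_one]
    field_simp
    ring
  refine strictAntiOn_of_deriv_neg (convex_Ici 0)
    (fun x hx => (hderiv x hx).continuousAt.continuousWithinAt) fun x hx => ?_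
  rw [interior_Ici] at hx
  rw [(hderiv x (mem_Ici_of_Ioi hx)).deriv, neg_lt_zero]
  exact mul_pos hζ (log_pos (by nlinarith [mem_Ioi.1 hx]))

theorem hasDerivAt_log_one_add_mul_div {x : ℝ} (hx : 0 < 1 + ζ * x) (hxPf : 0 < x + Pf) :
    HasDerivAt (fun P => log (1 + ζ * P) / (P + Pf))
      (optimalityGap ζ Pf x / ((1 + ζ * x) * (x + Pf) ^ 2)) x := by
  refine ((hasDerivAt_log_one_add_mul hx).div ((hasDerivAt_id x).add_const Pf)
    hxPf.ne').congr_deriv ?_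
  simp only [id, optimalityGap]
  field_simp

variable {Pstar : ℝ}

theorem optimalityGap_pos (hζ : 0 < ζ) (hgap : optimalityGap ζ Pf Pstar = 0) {x : ℝ}
    (hx : 0 ≤ x) (hxs : x < Pstar) : 0 < optimalityGap ζ Pf x := by
  have h := strictAntiOn_optimalityGap (Pf := Pf) hζ hx (hx.trans hxs.le) hxs
  rwa [hgap] at h

theorem optimalityGap_neg (hζ : 0 < ζ) (hPstar : 0 ≤ Pstar)
    (hgap : optimalityGap ζ Pf Pstar = 0) {x : ℝ} (hxs : Pstar < x) :
    optimalityGap ζ Pf x < 0 := by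
  have h := strictAntiOn_optimalityGap (Pf := Pf) hζ hPstar (hPstar.trans hxs.le) hxs
  rwa [hgap] at h

theorem strictMonoOn_log_one_add_mul_div (hζ : 0 < ζ) (hPf : 0 < Pf)
    (hgap : optimalityGap ζ Pf Pstar = 0) :
    StrictMonoOn (fun P => log (1 + ζ * P) / (P + Pf)) (Icc 0 Pstar) := by
  refine strictMonoOn_of_deriv_pos (convex_Icc 0 Pstar) (fun x hx =>
    (hasDerivAt_log_one_add_mul_div (by nlinarith [hx.1]) (by linarith [hx.1])).continuousAt
      |>.continuousWithinAt) fun x hx => ?_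
  rw [interior_Icc] at hx
  obtain ⟨hx0, hxs⟩ := hx
  have : 0 < 1 + ζ * x := by nlinarith
  rw [(hasDerivAt_log_one_add_mul_div this (by linarith)).deriv]
  exact div_pos (optimalityGap_pos hζ hgap hx0.le hxs) (by positivity)

theorem strictAntiOn_log_one_add_mul_div (hζ : 0 < ζ) (hPf : 0 < Pf) (hPstar : 0 ≤ Pstar)
    (hgap : optimalityGap ζ Pf Pstar = 0) :
    StrictAntiOn (fun P => log (1 + ζ * P) / (P + Pf)) (Ici Pstar) := by
  refine strictAntiOn_of_deriv_neg (convex_Ici Pstar) (fun x hx =>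
    (hasDerivAt_log_one_add_mul_div (by nlinarith [mem_Ici.1 hx])
      (by linarith [mem_Ici.1 hx])).continuousAt.continuousWithinAt) fun x hx => ?_
  rw [interior_Ici] at hx
  have hxs : Pstar < x := hx
  have h₁ : 0 < 1 + ζ * x := by nlinarith
  have h₂ : 0 < x + Pf := by linarith
  rw [(hasDerivAt_log_one_add_mul_div h₁ h₂).deriv]
  exact div_neg_of_neg_of_pos (optimalityGap_neg hζ hPstar hgap hxs) (by positivity)

theorem strictMonoOn_energyEff (hζ : 0 < ζ) (hPf : 0 < Pf) {χ : ℝ} (hχ : 0 ≤ χ)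
    (hgap : optimalityGap ζ Pf Pstar = 0) :
    StrictMonoOn (energyEff ζ Pf χ) (Icc 0 Pstar) := fun _ hx _ hy hxy =>
  (energyEff_lt_energyEff_iff hζ hPf hχ hx.1 hy.1).2
    (strictMonoOn_log_one_add_mul_div hζ hPf hgap hx hy hxy)

theorem strictAntiOn_energyEff (hζ : 0 < ζ) (hPf : 0 < Pf) {χ : ℝ} (hχ : 0 ≤ χ)
    (hPstar : 0 ≤ Pstar) (hgap : optimalityGap ζ Pf Pstar = 0) :
    StrictAntiOn (energyEff ζ Pf χ) (Ici Pstar) := fun _ hx _ hy hxy =>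
  (energyEff_lt_energyEff_iff hζ hPf hχ (hPstar.trans hy) (hPstar.trans hx)).2
    (strictAntiOn_log_one_add_mul_div hζ hPf hPstar hgap hx hy hxy)

end PowerControl

/-- Proposition 1: the Pareto optimal set of the SE–EE power-control problem is
`{P_T}` if `P* ≥ P_T`, and the interval `[P*, P_T]` if `P* < P_T`, where a point
`P ∈ [0, P_T]` is Pareto optimal if no `P' ∈ [0, P_T]` strictly improves both
the spectral efficiency `f_SE` and the energy efficiency `f_EE`. -/
theorem pareto_optimal_set
    (ζ Pf χ PT : ℝ) (hζ : 0 < ζ) (hPf : 0 < Pf) (hχ : 0 ≤ χ) (hPT : 0 < PT)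
    (Pstar : ℝ) (hPstar : 0 < Pstar)
    (hroot : ζ * (Pstar + Pf) = (1 + ζ * Pstar) * Real.log (1 + ζ * Pstar))
    (fSE fEE : ℝ → ℝ)
    (hfSE : ∀ P : ℝ, fSE P = Real.logb 2 (1 + ζ * P))
    (hfEE : ∀ P : ℝ, fEE P = fSE P / (P + Pf + χ * fSE P)) :
    (Pstar ≥ PT →
      {P : ℝ | P ∈ Set.Icc 0 PT ∧
          ¬∃ P' ∈ Set.Icc (0 : ℝ) PT, fSE P < fSE P' ∧ fEE P < fEE P'}
        = {PT}) ∧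
    (Pstar < PT →
      {P : ℝ | P ∈ Set.Icc 0 PT ∧
          ¬∃ P' ∈ Set.Icc (0 : ℝ) PT, fSE P < fSE P' ∧ fEE P < fEE P'}
        = Set.Icc Pstar PT) := by
  obtain rfl : fSE = spectralEff ζ := funext hfSE
  obtain rfl : fEE = energyEff ζ Pf χ := funext hfEE
  have hSE : StrictMonoOn (spectralEff ζ) (Icc 0 PT) :=
    (strictMonoOn_spectralEff hζ).mono Icc_subset_Ici_self
  have hgap : optimalityGap ζ Pf Pstar = 0 := sub_eq_zero.2 hroot
  have hEE_mono := strictMonoOn_energyEff hζ hPf hχ hgap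
  have hEE_anti := strictAntiOn_energyEff hζ hPf hχ hPstar.le hgap
  refine ⟨fun hge => ?_, fun hlt => ?_⟩
  · rw [← Icc_self PT]
    exact paretoSet_Icc_eq_Icc hPT.le le_rfl hSE (hEE_mono.mono (Icc_subset_Icc_right hge))
      ((subsingleton_Icc_of_ge le_rfl).strictAntiOn _)
  · exact paretoSet_Icc_eq_Icc hPstar.le hlt.le hSE hEE_mono (hEE_anti.mono Icc_subset_Ici_self)
end

section
/- If χ·ζ ≤ ln 2, then the function g₂(P) = ζ·(P + P_f + (χ/ln 2)·ln(1 + ζP)) / ( (1 + ζP + χζ/ln 2)·ln(1 + ζP) ) is strictly decreasing on (0, ∞). -/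
/-!
In the variable `t = log (1 + ζ P) > 0`, with `A = χ ζ / ln 2` and `c = ζ P_f`, the function is
`(eᵗ - 1 + c + A t) / ((eᵗ + A) t) = 1 - (1 - (1 - e⁻ᵗ) / t) · eᵗ / (eᵗ + A) + c / ((eᵗ + A) t)`.
Here `(1 - e⁻ᵗ) / t` is a secant slope of the concave function `1 - e⁻ᵗ` through `0`, so it
decreases and lies in `[0, 1]`; as `eᵗ / (eᵗ + A)` increases, the first part is antitone, and the
last term is strictly decreasing because `c > 0`.
-/

open Real Set

lemma convexOn_exp_neg : ConvexOn ℝ univ (fun t : ℝ => exp (-t)) := by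
  convert convexOn_exp.comp_linearMap (-LinearMap.id : ℝ →ₗ[ℝ] ℝ) using 1 <;> rfl

lemma antitoneOn_one_sub_exp_neg_div : AntitoneOn (fun t : ℝ => (1 - exp (-t)) / t) (Ioi 0) := by
  intro s hs t ht hst
  have hsecant := convexOn_exp_neg.secant_mono (mem_univ 0) (mem_univ s) (mem_univ t)
    (ne_of_gt hs) (ne_of_gt ht) hst
  simp only [neg_zero, exp_zero, sub_zero] at hsecant
  simp only [← neg_sub (exp _), neg_div]
  linarith

lemma monotone_exp_div_exp_add {A : ℝ} (hA : 0 ≤ A) :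
    Monotone (fun t : ℝ => exp t / (exp t + A)) := by
  intro s t hst
  have hs := exp_pos s
  have ht := exp_pos t
  rw [div_le_div_iff₀ (by positivity) (by positivity)]
  nlinarith [exp_le_exp.mpr hst]

lemma strictMonoOn_exp_add_mul {A : ℝ} (hA : 0 ≤ A) :
    StrictMonoOn (fun t : ℝ => (exp t + A) * t) (Ioi 0) := by
  intro s hs t ht hst
  have hexp : exp s + A < exp t + A := by gcongr
  exact mul_lt_mul hexp hst.le hs (by positivity)

lemma strictAntiOn_exp_sub_one_add_div_exp_add_mul {A c : ℝ} (hA : 0 ≤ A) (hc : 0 < c) :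
    StrictAntiOn (fun t => (exp t - 1 + c + A * t) / ((exp t + A) * t)) (Ioi 0) := by
  have hsplit : EqOn (fun t => (1 - (1 - (1 - exp (-t)) / t) * (exp t / (exp t + A)))
      + c / ((exp t + A) * t)) (fun t => (exp t - 1 + c + A * t) / ((exp t + A) * t)) (Ioi 0) := by
    intro t (ht : 0 < t)
    have := exp_pos t
    simp only [exp_neg]
    field_simp
    ring
  refine StrictAntiOn.congr (AntitoneOn.add_strictAnti ?_ ?_) hsplit
  · have hmono : MonotoneOn (fun t => (1 - (1 - exp (-t)) / t) * (exp t / (exp t + A))) (Ioi 0) :=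
      MonotoneOn.mul
        (fun s hs t ht hst => sub_le_sub_left (antitoneOn_one_sub_exp_neg_div hs ht hst) 1)
        ((monotone_exp_div_exp_add hA).monotoneOn _)
        (fun t (ht : 0 < t) => by
          rw [sub_nonneg, div_le_one ht]
          linarith [add_one_le_exp (-t)])
        (fun t _ => by positivity)
    exact fun s hs t ht hst => sub_le_sub_left (hmono hs ht hst) 1
  · intro s (hs : 0 < s) t (ht : 0 < t) hst
    exact div_lt_div_of_pos_left hc (by positivity) (strictMonoOn_exp_add_mul hA hs ht hst)

theorem g2_strictAnti_general
    (ζ Pf χ : ℝ) (hζ : 0 < ζ) (hPf : 0 < Pf) (hχ : 0 ≤ χ) :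
    StrictAntiOn
      (fun P : ℝ =>
        ζ * (P + Pf + χ / Real.log 2 * Real.log (1 + ζ * P)) /
          ((1 + ζ * P + χ * ζ / Real.log 2) * Real.log (1 + ζ * P)))
      (Set.Ioi 0) := by
  have hA : 0 ≤ χ * ζ / Real.log 2 := by positivity
  have hlog : StrictMonoOn (fun P => Real.log (1 + ζ * P)) (Ioi 0) :=
    fun x (hx : 0 < x) y _ hxy => log_lt_log (by positivity) (by gcongr)
  have hlog_pos : MapsTo (fun P => Real.log (1 + ζ * P)) (Ioi 0) (Ioi 0) :=
    fun P (hP : 0 < P) => log_pos (by simpa using mul_pos hζ hP)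
  refine ((strictAntiOn_exp_sub_one_add_div_exp_add_mul hA (mul_pos hζ hPf)).comp_strictMonoOn
    hlog hlog_pos).congr fun P (hP : 0 < P) => ?_
  simp only [Function.comp_apply, exp_log (by positivity : 0 < 1 + ζ * P)]
  ring

/-- Lemma 3: if `χζ ≤ ln 2`, the function
`g₂(P) = ζ·(P + P_f + (χ/ln 2)·ln(1 + ζP)) / ((1 + ζP + χζ/ln 2)·ln(1 + ζP))`
is strictly decreasing on `(0, ∞)`. -/
theorem g2_strictAnti
    (ζ Pf χ : ℝ) (hζ : 0 < ζ) (hPf : 0 < Pf) (hχ : 0 ≤ χ)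
    (hmild : χ * ζ ≤ Real.log 2) :
    StrictAntiOn
      (fun P : ℝ =>
        ζ * (P + Pf + χ / Real.log 2 * Real.log (1 + ζ * P)) /
          ((1 + ζ * P + χ * ζ / Real.log 2) * Real.log (1 + ζ * P)))
      (Set.Ioi 0) :=
  g2_strictAnti_general ζ Pf χ hζ hPf hχ
end

section
/- For every constant A with 0 ≤ A ≤ 1, the function ρ ↦ ρ / ( (1 + ρ + A)·ln(1 + ρ) ) is strictly decreasing on (0, ∞). -/
/-!
Write `y = 1 + ρ` and `D(ρ) = (1 + ρ + A) log y`. The derivative of `ρ / D(ρ)` has the sign of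
`D - ρ D'`, which is negative exactly when `(1 + A) y log y < (y - 1)(y + A)`. This inequality is
affine in `A`, so for `A ∈ [0, 1]` it interpolates between `log y < y - 1` at `A = 0` and
`2 y log y < y² - 1` at `A = 1`; the latter is `t < sinh t` for `t = log y`.
-/

open Real Set

theorem strictAntiOn_self_div_of_lt_mul_deriv {s : Set ℝ} (hs : Convex ℝ s) (hso : IsOpen s)
    {D D' : ℝ → ℝ} (hD : ∀ x ∈ s, HasDerivAt D (D' x) x) (hD0 : ∀ x ∈ s, D x ≠ 0)
    (hlt : ∀ x ∈ s, D x < x * D' x) :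
    StrictAntiOn (fun x => x / D x) s := by
  have hderiv : ∀ x ∈ s, HasDerivAt (fun x => x / D x) ((D x - x * D' x) / D x ^ 2) x := by
    intro x hx
    exact ((hasDerivAt_id' x).fun_div (hD x hx) (hD0 x hx)).congr_deriv (by ring)
  refine strictAntiOn_of_deriv_neg hs
    (fun x hx => (hderiv x hx).continuousAt.continuousWithinAt) fun x hx => ?_
  rw [hso.interior_eq] at hx
  rw [(hderiv x hx).deriv]
  exact div_neg_of_neg_of_pos (sub_neg.2 (hlt x hx)) (sq_pos_of_ne_zero (hD0 x hx))

theorem two_mul_self_mul_log_lt_sq_sub_one {y : ℝ} (hy : 1 < y) :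
    2 * y * log y < y ^ 2 - 1 := by
  have hy0 : 0 < y := by linarith
  have h : log y < sinh (log y) := self_lt_sinh_iff.2 (log_pos hy)
  rw [sinh_log hy0] at h
  have : y * (y - y⁻¹) = y ^ 2 - 1 := by field_simp
  nlinarith

theorem one_add_mul_self_mul_log_lt {A y : ℝ} (hA0 : 0 ≤ A) (hA1 : A ≤ 1) (hy : 1 < y) :
    (1 + A) * y * log y < (y - 1) * (y + A) := by
  have hy0 : 0 < y := by linarith
  have h0 : y * log y < y * (y - 1) := by
    have := log_lt_sub_one_of_pos hy0 hy.ne'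
    nlinarith
  have h1 := two_mul_self_mul_log_lt_sq_sub_one hy
  rcases hA0.lt_or_eq with hA | rfl
  · nlinarith [mul_lt_mul_of_pos_left h1 hA, mul_le_mul_of_nonneg_left h0.le (sub_nonneg.2 hA1)]
  · linarith

/-- Equation (29) in the proof of Lemma 3: for `A ∈ [0,1]`, the function
`ρ ↦ ρ / ((1 + ρ + A)·ln(1 + ρ))` is strictly decreasing on `(0, ∞)`. -/
theorem first_term_strictAnti
    (A : ℝ) (hA0 : 0 ≤ A) (hA1 : A ≤ 1) :
    StrictAntiOn (fun ρ : ℝ => ρ / ((1 + ρ + A) * Real.log (1 + ρ)))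
      (Set.Ioi 0) := by
  refine strictAntiOn_self_div_of_lt_mul_deriv (convex_Ioi 0) isOpen_Ioi
    (D' := fun ρ => log (1 + ρ) + (1 + ρ + A) / (1 + ρ))
    (fun ρ (hρ : 0 < ρ) => ?_) (fun ρ (hρ : 0 < ρ) => ?_) (fun ρ (hρ : 0 < ρ) => ?_)
  · have hlog : HasDerivAt (fun ρ => log (1 + ρ)) (1 / (1 + ρ)) ρ := by
      simpa using ((hasDerivAt_id ρ).const_add 1).log (by positivity)
    exact ((((hasDerivAt_id' ρ).const_add 1).add_const A).fun_mul hlog).congr_deriv (by ring)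
  · exact (mul_pos (by positivity) (log_pos (by linarith))).ne'
  · have key := one_add_mul_self_mul_log_lt hA0 hA1 (y := 1 + ρ) (by linarith)
    rw [add_sub_cancel_left] at key
    rw [mul_add, mul_div_assoc', ← sub_lt_iff_lt_add', lt_div_iff₀ (by positivity)]
    linear_combination key
end

section
/- Suppose χζ ≤ ln 2, β ∈ (0, 1), P* < P_T, and g₂(P_T) ≤ 1 − β, where P* is the unique root of ζ(P + P_f) = (1 + ζP)·ln(1 + ζP). Then the equation g₂(P) = 1 − β has a unique solution P** in [P*, P_T]; moreover f₂(P) = ln(log₂(1 + ζP)) − (1 − β)·ln(P + P_f + χ·log₂(1 + ζP)) is strictly increasing on (0, P**] and non-increasing on [P**, P_T], so P** maximizes f₂ over (0, P_T]. -/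
/-!
In the variable `u = 1 + ζP`, the derivative of `g₂` has the sign of
`(u + k)² ln u − (u − 1 + p + k ln u)(u ln u + u + k)`, which is negative by
`1 − 1/u ≤ ln u ≤ u − 1`. Hence `g₂` is strictly decreasing, and `g₂(P*) = 1 > 1 − β ≥ g₂(P_T)`
produces `P**` by the intermediate value theorem. Since `f₂′(P)` is a positive multiple of
`g₂(P) − (1 − β)`, `f₂` increases up to `P**` and decreases after it.
-/

open Real Set

lemma sq_mul_log_lt_of_one_lt {u p k : ℝ} (hu : 1 < u) (hp : 0 < p) (hk : 0 ≤ k) :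
    (u + k) ^ 2 * log u < (u - 1 + p + k * log u) * (u * log u + u + k) := by
  have hL : 0 < log u := log_pos hu
  have hL_le : log u ≤ u - 1 := log_le_sub_one_of_pos (by linarith)
  have hL_ge : u - 1 ≤ u * log u := by
    have := one_sub_inv_le_log_of_pos (by linarith : 0 < u)
    have hu' : u * (1 - u⁻¹) = u - 1 := by field_simp
    nlinarith
  nlinarith [mul_pos hp (by nlinarith : 0 < u * log u + u + k),
    mul_nonneg (by linarith : 0 ≤ u + k) (by linarith : 0 ≤ u - 1 - log u),
    mul_nonneg (mul_nonneg hk hL.le) (by linarith : 0 ≤ u * log u - u + 1)]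

/-- `g₂` in the variable `u = 1 + ζP`, with `p = ζ P_f` and `k = χζ / ln 2`. -/
noncomputable def powerRatio (p k u : ℝ) : ℝ :=
  (u - 1 + p + k * log u) / ((u + k) * log u)

lemma hasDerivAt_powerRatio {p k u : ℝ} (hu : 1 < u) (hk : 0 ≤ k) :
    HasDerivAt (powerRatio p k)
      (((u + k) ^ 2 * log u - (u - 1 + p + k * log u) * (u * log u + u + k)) /
        (u * ((u + k) * log u) ^ 2)) u := by
  have hu0 : u ≠ 0 := by positivity
  have hD : (u + k) * log u ≠ 0 := (mul_pos (by linarith) (log_pos hu)).ne'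
  have hlog : HasDerivAt log u⁻¹ u := hasDerivAt_log hu0
  have hN : HasDerivAt (fun u => u - 1 + p + k * log u) (1 + k * u⁻¹) u :=
    ((((hasDerivAt_id u).sub_const 1).add_const p).add (hlog.const_mul k))
  have hD' : HasDerivAt (fun u => (u + k) * log u) (log u + (u + k) * u⁻¹) u :=
    (((hasDerivAt_id' u).add_const k).mul hlog).congr_deriv (by ring)
  refine (hN.div hD' hD).congr_deriv ?_
  field_simp
  ring

lemma strictAntiOn_powerRatio {p k : ℝ} (hp : 0 < p) (hk : 0 ≤ k) :
    StrictAntiOn (powerRatio p k) (Ioi 1) := by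
  refine strictAntiOn_of_hasDerivWithinAt_neg (convex_Ioi 1) (f' := fun u =>
      ((u + k) ^ 2 * log u - (u - 1 + p + k * log u) * (u * log u + u + k)) /
        (u * ((u + k) * log u) ^ 2))
    (fun u hu => (hasDerivAt_powerRatio hu hk).continuousAt.continuousWithinAt)
    (fun u hu => ?_) (fun u hu => ?_) <;> rw [interior_Ioi] at hu
  · exact (hasDerivAt_powerRatio hu hk).hasDerivWithinAt
  · have : 0 < u := by linarith [mem_Ioi.1 hu]
    exact div_neg_of_neg_of_pos (sub_neg.2 (sq_mul_log_lt_of_one_lt hu hp hk))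
      (by have := log_pos hu; positivity)

lemma powerRatio_eq_one {p k u : ℝ} (hu : 1 < u) (hk : 0 ≤ k) (h : u - 1 + p = u * log u) :
    powerRatio p k u = 1 := by
  have hD : (u + k) * log u ≠ 0 := (mul_pos (by linarith) (log_pos hu)).ne'
  rw [powerRatio, div_eq_one_iff_eq hD, h]
  ring

lemma hasDerivAt_log_logb_sub_mul_log {ζ Pf χ γ P : ℝ} (hζ : 0 < ζ) (hPf : 0 < Pf)
    (hχ : 0 ≤ χ) (hP : 0 < P) :
    HasDerivAt (fun P => log (logb 2 (1 + ζ * P)) - γ * log (P + Pf + χ * logb 2 (1 + ζ * P)))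
      ((1 + ζ * P + χ * ζ / log 2) / ((1 + ζ * P) * (P + Pf + χ * logb 2 (1 + ζ * P))) *
        (powerRatio (ζ * Pf) (χ * ζ / log 2) (1 + ζ * P) - γ)) P := by
  have hu : 1 < 1 + ζ * P := by nlinarith
  have hL : 0 < log (1 + ζ * P) := log_pos hu
  have hl2 : 0 < log 2 := log_pos one_lt_two
  have hlogb : 0 < logb 2 (1 + ζ * P) := div_pos hL hl2
  have hN : 0 < P + Pf + χ * logb 2 (1 + ζ * P) := by positivity
  have hlin : HasDerivAt (fun P => 1 + ζ * P) ζ P := by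
    simpa using ((hasDerivAt_id P).const_mul ζ).const_add 1
  have hB : HasDerivAt (fun P => logb 2 (1 + ζ * P)) (ζ / (1 + ζ * P) / log 2) P :=
    (hlin.log (by positivity)).div_const (log 2)
  have hN' : HasDerivAt (fun P => P + Pf + χ * logb 2 (1 + ζ * P))
      (1 + χ * (ζ / (1 + ζ * P) / log 2)) P :=
    ((hasDerivAt_id P).add_const Pf).add (hB.const_mul χ)
  refine ((hB.log hlogb.ne').sub ((hN'.log hN.ne').const_mul γ)).congr_deriv ?_
  simp only [powerRatio, logb] at hN ⊢
  field_simp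
  ring

lemma strictMonoOn_Ioc_of_hasDerivAt_mul_sub {f w g : ℝ → ℝ} {a b c : ℝ}
    (hf : ∀ x ∈ Ioi a, HasDerivAt f (w x * (g x - c)) x) (hw : ∀ x ∈ Ioi a, 0 < w x)
    (hg : StrictAntiOn g (Ioi a)) (hb : a < b) (hgb : g b = c) :
    StrictMonoOn f (Ioc a b) := by
  refine strictMonoOn_of_hasDerivWithinAt_pos (f' := fun x => w x * (g x - c)) (convex_Ioc a b)
    (fun x hx => (hf x hx.1).continuousAt.continuousWithinAt)
    (fun x hx => ?_) (fun x hx => ?_) <;> rw [interior_Ioc] at hx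
  · exact (hf x hx.1).hasDerivWithinAt
  · exact mul_pos (hw x hx.1) (sub_pos.2 (hgb ▸ hg hx.1 hb hx.2))

lemma antitoneOn_Ici_of_hasDerivAt_mul_sub {f w g : ℝ → ℝ} {a b c : ℝ}
    (hf : ∀ x ∈ Ioi a, HasDerivAt f (w x * (g x - c)) x) (hw : ∀ x ∈ Ioi a, 0 < w x)
    (hg : StrictAntiOn g (Ioi a)) (hb : a < b) (hgb : g b = c) :
    AntitoneOn f (Ici b) := by
  have hsub : ∀ x, b ≤ x → x ∈ Ioi a := fun x hx => hb.trans_le hx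
  refine antitoneOn_of_hasDerivWithinAt_nonpos (f' := fun x => w x * (g x - c)) (convex_Ici b)
    (fun x hx => (hf x (hsub x hx)).continuousAt.continuousWithinAt)
    (fun x hx => ?_) (fun x hx => ?_) <;> rw [interior_Ici] at hx
  · exact (hf x (hsub x (le_of_lt hx))).hasDerivWithinAt
  · exact mul_nonpos_of_nonneg_of_nonpos (hw x (hsub x (le_of_lt hx))).le
      (sub_nonpos.2 (hgb ▸ (hg hb (hsub x (le_of_lt hx)) hx).le))

lemma isMaxOn_of_strictMonoOn_of_antitoneOn {f : ℝ → ℝ} {a b : ℝ} (hb : a < b)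
    (hmono : StrictMonoOn f (Ioc a b)) (hanti : AntitoneOn f (Ici b)) :
    IsMaxOn f (Ioi a) b := by
  intro x hx
  rcases le_total x b with hxb | hbx
  · exact hmono.monotoneOn ⟨hx, hxb⟩ ⟨hb, le_rfl⟩ hxb
  · exact hanti (mem_Ici.2 le_rfl) hbx hbx

theorem optimal_power_case2_general
    (ζ Pf χ β PT : ℝ) (hζ : 0 < ζ) (hPf : 0 < Pf) (hχ : 0 ≤ χ)
    (hβ0 : 0 < β)
    (g₂ f₂ : ℝ → ℝ)
    (hg₂ : ∀ P : ℝ, g₂ P =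
      ζ * (P + Pf + χ / Real.log 2 * Real.log (1 + ζ * P)) /
        ((1 + ζ * P + χ * ζ / Real.log 2) * Real.log (1 + ζ * P)))
    (hf₂ : ∀ P : ℝ, f₂ P =
      Real.log (Real.logb 2 (1 + ζ * P)) -
        (1 - β) * Real.log (P + Pf + χ * Real.logb 2 (1 + ζ * P)))
    (Pstar : ℝ) (hPstar : 0 < Pstar)
    (hroot : ζ * (Pstar + Pf) = (1 + ζ * Pstar) * Real.log (1 + ζ * Pstar))
    (hPstarPT : Pstar < PT) (hgPT : g₂ PT ≤ 1 - β) :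
    ∃ Pss : ℝ, Pss ∈ Set.Icc Pstar PT ∧ g₂ Pss = 1 - β ∧
      (∀ Q ∈ Set.Icc Pstar PT, g₂ Q = 1 - β → Q = Pss) ∧
      StrictMonoOn f₂ (Set.Ioc 0 Pss) ∧
      AntitoneOn f₂ (Set.Icc Pss PT) ∧
      ∀ P ∈ Set.Ioc (0 : ℝ) PT, f₂ P ≤ f₂ Pss := by
  have hk : 0 ≤ χ * ζ / log 2 := div_nonneg (mul_nonneg hχ hζ.le) (log_pos one_lt_two).le
  have hu : ∀ P ∈ Ioi (0 : ℝ), 1 < 1 + ζ * P := fun P hP => by nlinarith [mem_Ioi.1 hP]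
  have hg : ∀ P, g₂ P = powerRatio (ζ * Pf) (χ * ζ / log 2) (1 + ζ * P) := fun P => by
    rw [hg₂, powerRatio]; ring
  have hg_anti : StrictAntiOn g₂ (Ioi 0) := fun x hx y hy hxy => by
    simpa only [hg] using
      strictAntiOn_powerRatio (mul_pos hζ hPf) hk (hu x hx) (hu y hy) (by gcongr)
  have hg_star : g₂ Pstar = 1 := by
    rw [hg]; exact powerRatio_eq_one (hu Pstar hPstar) hk (by linarith)
  have hg_cont : ContinuousOn g₂ (Icc Pstar PT) := fun P hP => by
    have hP0 : P ∈ Ioi 0 := hPstar.trans_le hP.1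
    rw [funext hg]
    exact ((hasDerivAt_powerRatio (p := ζ * Pf) (hu P hP0) hk).continuousAt.comp
      (f := fun P => 1 + ζ * P) (by fun_prop)).continuousWithinAt
  obtain ⟨Pss, hPss, hgPss⟩ : ∃ Pss ∈ Icc Pstar PT, g₂ Pss = 1 - β :=
    intermediate_value_Icc' hPstarPT.le hg_cont ⟨hgPT, by linarith⟩
  have hPss0 : 0 < Pss := hPstar.trans_le hPss.1
  have hf : ∀ P ∈ Ioi 0, HasDerivAt f₂ ((1 + ζ * P + χ * ζ / log 2) /
      ((1 + ζ * P) * (P + Pf + χ * logb 2 (1 + ζ * P))) * (g₂ P - (1 - β))) P :=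
    fun P hP => funext hf₂ ▸ hg P ▸ hasDerivAt_log_logb_sub_mul_log hζ hPf hχ hP
  have hw : ∀ P ∈ Ioi (0 : ℝ), 0 < (1 + ζ * P + χ * ζ / log 2) /
      ((1 + ζ * P) * (P + Pf + χ * logb 2 (1 + ζ * P))) := fun P hP => by
    have hP0 : 0 < P := hP
    have hlogb : 0 < logb 2 (1 + ζ * P) := logb_pos one_lt_two (hu P hP)
    positivity
  have hmono := strictMonoOn_Ioc_of_hasDerivAt_mul_sub hf hw hg_anti hPss0 hgPss
  have hanti := antitoneOn_Ici_of_hasDerivAt_mul_sub hf hw hg_anti hPss0 hgPss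
  refine ⟨Pss, hPss, hgPss, fun Q hQ hgQ => hg_anti.injOn (hPstar.trans_le hQ.1) hPss0
    (hgQ.trans hgPss.symm), hmono, hanti.mono Icc_subset_Ici_self,
    fun P hP => isMaxOn_of_strictMonoOn_of_antitoneOn hPss0 hmono hanti hP.1⟩

/-- Case 2 of the optimal transmit power characterization (equation (32)):
if `χζ ≤ ln 2`, `β ∈ (0,1)`, `P* < P_T` and `g₂(P_T) ≤ 1 − β`, then
`g₂(P) = 1 − β` has a unique solution `P** ∈ [P*, P_T]`, and
`f₂` is strictly increasing on `(0, P**]` and non-increasing on `[P**, P_T]`,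
so `P**` maximizes `f₂` over `(0, P_T]`. -/
theorem optimal_power_case2
    (ζ Pf χ β PT : ℝ) (hζ : 0 < ζ) (hPf : 0 < Pf) (hχ : 0 ≤ χ)
    (hmild : χ * ζ ≤ Real.log 2) (hβ0 : 0 < β) (hβ1 : β < 1) (hPT : 0 < PT)
    (g₂ f₂ : ℝ → ℝ)
    (hg₂ : ∀ P : ℝ, g₂ P =
      ζ * (P + Pf + χ / Real.log 2 * Real.log (1 + ζ * P)) /
        ((1 + ζ * P + χ * ζ / Real.log 2) * Real.log (1 + ζ * P)))
    (hf₂ : ∀ P : ℝ, f₂ P =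
      Real.log (Real.logb 2 (1 + ζ * P)) -
        (1 - β) * Real.log (P + Pf + χ * Real.logb 2 (1 + ζ * P)))
    (Pstar : ℝ) (hPstar : 0 < Pstar)
    (hroot : ζ * (Pstar + Pf) = (1 + ζ * Pstar) * Real.log (1 + ζ * Pstar))
    (hPstarPT : Pstar < PT) (hgPT : g₂ PT ≤ 1 - β) :
    ∃ Pss : ℝ, Pss ∈ Set.Icc Pstar PT ∧ g₂ Pss = 1 - β ∧
      (∀ Q ∈ Set.Icc Pstar PT, g₂ Q = 1 - β → Q = Pss) ∧
      StrictMonoOn f₂ (Set.Ioc 0 Pss) ∧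
      AntitoneOn f₂ (Set.Icc Pss PT) ∧
      ∀ P ∈ Set.Ioc (0 : ℝ) PT, f₂ P ≤ f₂ Pss :=
  optimal_power_case2_general ζ Pf χ β PT hζ hPf hχ hβ0 g₂ f₂ hg₂ hf₂ Pstar hPstar hroot hPstarPT
    hgPT
end
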